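/- arXiv:1802.08756 — 5 statements merged into one kernel-verified Lean document; each statement's English description precedes it below -/
import Mathlib

section
/- In any guarded category, weakening is derivable: if f ∈ Hom•((A⊗A')⊗B, C⊗(D'⊗D)), then the conjugate of f by the associativity isomorphisms lies in Hom•(A⊗(A'⊗B), (C⊗D')⊗D), i.e. any guarded input may be re-marked as unguarded and any guarded output may be re-marked as unguarded. -/
/-! Weakening reduces to showing that the associator `α⁻¹ : U ⊗ (V ⊗ W) → (U ⊗ V) ⊗ W` is
partially guarded with `V` moving from the guarded inputs to the unguarded outputs; then `f` is
conjugated by two such associators using (cmp). The key case `W = 𝟙` comes from (uni): the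
symmetry `𝟙 ⊗ V → V ⊗ 𝟙` carries the guarded input `V` to an unguarded output, and (par) with
an identity on `U` plus unitor bookkeeping via (vac) turns it into `ρ⁻¹ : U ⊗ V → (U ⊗ V) ⊗ 𝟙`.
A second application of (par), now with the identity on `W`, gives the associator. -/

open CategoryTheory MonoidalCategory

universe v u

/-- An (abstractly) guarded category structure on a symmetric monoidal category `C`:
distinguished subsets `Hom•(A⊗B, C⊗D) ⊆ Hom(A⊗B, C⊗D)` of partially guarded morphisms
(`A`: unguarded inputs, `B`: guarded inputs, `C`: unguarded outputs, `D`: guarded outputs),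
closed under the rules (uni), (vac), (cmp), (par). -/
structure GuardedStructure (C : Type u) [Category.{v} C] [MonoidalCategory C]
    [SymmetricCategory C] where
  /-- the family of sets of partially guarded morphisms -/
  P : ∀ A B X D : C, Set ((A ⊗ B) ⟶ X ⊗ D)
  /-- rule (uni⊗) -/
  uni : ∀ A : C, (β_ (𝟙_ C) A).hom ∈ P (𝟙_ C) A A (𝟙_ C)
  /-- rule (vac⊗) -/
  vac : ∀ {A B X D : C} (f : A ⟶ X) (g : B ⟶ D), (f ⊗ₘ g) ∈ P A B X D
  /-- rule (cmp⊗) -/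
  cmp : ∀ {A B E F X D : C} {g : (A ⊗ B) ⟶ E ⊗ F} {f : (E ⊗ F) ⟶ X ⊗ D},
    g ∈ P A B E F → f ∈ P E F X D → g ≫ f ∈ P A B X D
  /-- rule (par⊗): the evident transpose of `f ⊗ g` (conjugation by the middle-four
  interchange coherence isomorphism) is partially guarded. -/
  par : ∀ {A B X D A' B' X' D' : C}
    {f : (A ⊗ B) ⟶ X ⊗ D} {g : (A' ⊗ B') ⟶ X' ⊗ D'},
    f ∈ P A B X D → g ∈ P A' B' X' D' →
      tensorμ A A' B B' ≫ (f ⊗ₘ g) ≫ tensorμ X D X' D' ∈ P (A ⊗ A') (B ⊗ B') (X ⊗ X') (D ⊗ D')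

variable {C : Type u} [Category.{v} C] [MonoidalCategory C] [SymmetricCategory C]

namespace GuardedStructure

variable (G : GuardedStructure C)

theorem tensorHom_comp_comp_tensorHom_mem {A B X D A' B' X' D' : C} {f : (A ⊗ B) ⟶ X ⊗ D}
    (hf : f ∈ G.P A B X D) (a : A' ⟶ A) (b : B' ⟶ B) (x : X ⟶ X') (d : D ⟶ D') :
    (a ⊗ₘ b) ≫ f ≫ (x ⊗ₘ d) ∈ G.P A' B' X' D' :=
  G.cmp (G.vac a b) (G.cmp hf (G.vac x d))

theorem rightUnitor_inv_mem (U V : C) : (ρ_ (U ⊗ V)).inv ∈ G.P U V (U ⊗ V) (𝟙_ C) := by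
  have h := G.tensorHom_comp_comp_tensorHom_mem (G.par (G.vac (𝟙 U) (𝟙 (𝟙_ C))) (G.uni V))
    (ρ_ U).inv (λ_ V).inv (𝟙 (U ⊗ V)) (λ_ (𝟙_ C)).hom
  convert h using 1
  simp only [tensorμ, braiding_tensorUnit_left]
  monoidal

theorem associator_inv_mem (U V W : C) : (α_ U V W).inv ∈ G.P U (V ⊗ W) (U ⊗ V) W := by
  have h := G.tensorHom_comp_comp_tensorHom_mem
    (G.par (G.rightUnitor_inv_mem U V) (G.vac (𝟙 (𝟙_ C)) (𝟙 W)))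
    (ρ_ U).inv (𝟙 (V ⊗ W)) (ρ_ (U ⊗ V)).hom (λ_ W).hom
  convert h using 1
  simp only [tensorμ, braiding_tensorUnit_left]
  monoidal

end GuardedStructure

/-- **Weakening.** In any guarded category, if
`f ∈ Hom•((A⊗A')⊗B, C⊗(D'⊗D))` then the transpose of `f` along the associativity
isomorphisms lies in `Hom•(A⊗(A'⊗B), (C⊗D')⊗D)`: a guarded input (`A'`) may be re-marked
as unguarded, and a guarded output (`D'`) may be re-marked as unguarded. -/
theorem guarded_weakening (G : GuardedStructure C) {A A' B X D' D : C}
    (f : ((A ⊗ A') ⊗ B) ⟶ X ⊗ (D' ⊗ D))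
    (hf : f ∈ G.P (A ⊗ A') B X (D' ⊗ D)) :
    (α_ A A' B).inv ≫ f ≫ (α_ X D' D).inv ∈ G.P A (A' ⊗ B) (X ⊗ D') D :=
  G.cmp (G.associator_inv_mem A A' B) (G.cmp hf (G.associator_inv_mem X D' D))
end

section
/- For any co-Cartesian category (C,+,0) there is a bijective correspondence between guarded structures on C and co-Cartesian guardedness families on C, determined by: f ∈ Hom•(X₁+X₂, Y₁+Y₂) if and only if f∘in₁ ∈ Hom_{in₂}(X₁, Y₁+Y₂). That is, every guarded structure induces a co-Cartesian guardedness family by this formula, every co-Cartesian guardedness family arises from a unique guarded structure, and the two transformations are mutually inverse. -/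
/-! Statement 3: guarded structures on a co-Cartesian category correspond to co-Cartesian guardedness families. -/

open CategoryTheory MonoidalCategory

universe v u

open CategoryTheory.Limits

variable (C : Type u) [Category.{v} C] [HasBinaryCoproducts C] [HasInitial C]

attribute [local instance] CategoryTheory.monoidalOfHasFiniteCoproducts
  CategoryTheory.symmetricOfHasFiniteCoproducts

/-- A *co-Cartesian guardedness family* on a co-Cartesian category `(C, +, 0)`: subsets
`Hom_σ(X, Y₁+Y₂) ⊆ Hom(X, Y₁+Y₂)` (with `σ` the coproduct injection `in₂ : Y₂ → Y₁+Y₂`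
marking the guarded output component `Y₂`), written here `H X Y₁ Y₂`, satisfying
(vac₊), (cmp₊) and (par₊). -/
structure CoCartesianGuardedness where
  /-- `H X Y₁ Y₂` represents `Hom_{in₂}(X, Y₁+Y₂)`. -/
  H : ∀ X Y₁ Y₂ : C, Set (X ⟶ Y₁ ⨿ Y₂)
  /-- rule (vac₊): `f : X → Z` implies `in₁ ∘ f : X →_{in₂} Z+Y`. -/
  vac : ∀ {X Z : C} (Y : C) (f : X ⟶ Z), f ≫ coprod.inl ∈ H X Z Y
  /-- rule (cmp₊): `f : X →_{in₂} Y+Z`, `g : Y →_σ V` and `h : Z → V` imply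
  `[g,h] ∘ f : X →_σ V`. -/
  cmp : ∀ {X Y Z V₁ V₂ : C} (f : X ⟶ Y ⨿ Z) (g : Y ⟶ V₁ ⨿ V₂) (h : Z ⟶ V₁ ⨿ V₂),
    f ∈ H X Y Z → g ∈ H Y V₁ V₂ → f ≫ coprod.desc g h ∈ H X V₁ V₂
  /-- rule (par₊): `f : X →_σ Z` and `g : Y →_σ Z` imply `[f,g] : X+Y →_σ Z`. -/
  par : ∀ {X Y Z₁ Z₂ : C} (f : X ⟶ Z₁ ⨿ Z₂) (g : Y ⟶ Z₁ ⨿ Z₂),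
    f ∈ H X Z₁ Z₂ → g ∈ H Y Z₁ Z₂ → coprod.desc f g ∈ H (X ⨿ Y) Z₁ Z₂

variable {C}

/-- The relation determining the correspondence between a guarded structure and a
co-Cartesian guardedness family: `f ∈ Hom•(X₁+X₂, Y₁+Y₂)` iff
`f ∘ in₁ ∈ Hom_{in₂}(X₁, Y₁+Y₂)`. -/
def Determines (G : GuardedStructure C) (H : CoCartesianGuardedness C) : Prop :=
  ∀ (X₁ X₂ Y₁ Y₂ : C) (f : (X₁ ⊗ X₂) ⟶ Y₁ ⊗ Y₂),
    f ∈ G.P X₁ X₂ Y₁ Y₂ ↔ (coprod.inl ≫ f : X₁ ⟶ Y₁ ⨿ Y₂) ∈ H.H X₁ Y₁ Y₂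

/-!
In a co-Cartesian category, whether `f : X₁ + X₂ → Y₁ + Y₂` is partially guarded depends only on
`f ∘ in₁`: (uni) and (par) make every morphism `0 + B → V₁ + V₂` partially guarded, and pairing `f`
with such a morphism by (par) replaces the guarded-input component `f ∘ in₂` by an arbitrary one.
So a guarded structure amounts to the family `Hom_{in₂}(X, Y) := Hom•(X + 0, Y)`, and the axioms of
the two notions translate into each other.
-/

-- Mathlib leaves these to `colimit.ι_desc`, which `simp` fails to apply to `coprod.inl`/`coprod.inr`.
attribute [local simp] coprod.inl_desc coprod.inr_desc coprod.inl_desc_assoc coprod.inr_desc_assoc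

theorem CategoryTheory.monoidalOfHasFiniteCoproducts.tensorμ_eq (X₁ X₂ Y₁ Y₂ : C) :
    tensorμ X₁ X₂ Y₁ Y₂ =
      coprod.desc (coprod.map coprod.inl coprod.inl) (coprod.map coprod.inr coprod.inr) := by
  apply coprod.hom_ext <;> apply coprod.hom_ext <;>
    simp [tensorμ, monoidalOfHasFiniteCoproducts.associator_hom,
      monoidalOfHasFiniteCoproducts.associator_inv]

namespace GuardedStructure

variable (G : GuardedStructure C)

theorem desc_desc_mem {A B A' B' X D : C} {f : A ⨿ B ⟶ X ⨿ D} {g : A' ⨿ B' ⟶ X ⨿ D}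
    (hf : f ∈ G.P A B X D) (hg : g ∈ G.P A' B' X D) :
    coprod.desc (coprod.desc (coprod.inl ≫ f) (coprod.inl ≫ g))
      (coprod.desc (coprod.inr ≫ f) (coprod.inr ≫ g)) ∈ G.P (A ⨿ A') (B ⨿ B') X D := by
  have hfg := G.par hf hg
  rw [monoidalOfHasFiniteCoproducts.tensorμ_eq, monoidalOfHasFiniteCoproducts.tensorμ_eq] at hfg
  refine Set.mem_of_eq_of_mem ?_
    (G.cmp hfg (G.vac (coprod.desc (𝟙 X) (𝟙 X)) (coprod.desc (𝟙 D) (𝟙 D))))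
  ext <;> simp

theorem mem_of_initial {B V₁ V₂ : C} (u : (⊥_ C) ⨿ B ⟶ V₁ ⨿ V₂) : u ∈ G.P (⊥_ C) B V₁ V₂ := by
  -- `u` factors through the pairing of (uni) at `V₁` with (vac) at `V₂`, a morphism
  -- `(0 + 0) + (V₁ + V₂) → V₁ + V₂` that is the identity on `V₁ + V₂`.
  have hV₁ := G.cmp (G.uni V₁) (G.vac (𝟙 V₁) (initial.to V₂))
  have hV₂ := G.vac (initial.to V₁) (𝟙 V₂)
  refine Set.mem_of_eq_of_mem ?_
    (G.cmp (G.vac (initial.to ((⊥_ C) ⨿ (⊥_ C))) (coprod.inr ≫ u)) (G.desc_desc_mem hV₁ hV₂))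
  ext; simp

theorem mem_of_inl_comp_eq {X₁ X₂ B Y₁ Y₂ : C} {f : X₁ ⨿ X₂ ⟶ Y₁ ⨿ Y₂}
    {f' : X₁ ⨿ B ⟶ Y₁ ⨿ Y₂} (hf : f ∈ G.P X₁ X₂ Y₁ Y₂) (e : coprod.inl ≫ f = coprod.inl ≫ f') :
    f' ∈ G.P X₁ B Y₁ Y₂ := by
  have h := G.desc_desc_mem hf (G.mem_of_initial (coprod.desc (initial.to _) (coprod.inr ≫ f')))
  refine Set.mem_of_eq_of_mem ?_ (G.cmp (G.vac coprod.inl coprod.inr) h)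
  ext <;> simp [← e]

def toCoCartesianGuardedness : CoCartesianGuardedness C where
  H X Y₁ Y₂ := {g | coprod.desc g (initial.to _) ∈ G.P X (⊥_ C) Y₁ Y₂}
  vac Y f := G.mem_of_inl_comp_eq (G.vac f (𝟙 Y)) (by simp)
  cmp f g h hf hg :=
    G.mem_of_inl_comp_eq (G.cmp hf (G.mem_of_inl_comp_eq hg (f' := coprod.desc g h) (by simp)))
      (by simp)
  par _ _ hf hg := G.mem_of_inl_comp_eq (G.desc_desc_mem hf hg) (by simp)

theorem mem_toCoCartesianGuardedness_iff {X Y₁ Y₂ : C} (g : X ⟶ Y₁ ⨿ Y₂) :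
    g ∈ G.toCoCartesianGuardedness.H X Y₁ Y₂ ↔
      coprod.desc g (initial.to _) ∈ G.P X (⊥_ C) Y₁ Y₂ :=
  Iff.rfl

theorem determines_toCoCartesianGuardedness : Determines G G.toCoCartesianGuardedness := by
  intro X₁ X₂ Y₁ Y₂ f
  rw [mem_toCoCartesianGuardedness_iff]
  exact ⟨fun hf => G.mem_of_inl_comp_eq hf (by simp), fun hf => G.mem_of_inl_comp_eq hf (by simp)⟩

end GuardedStructure

theorem CoCartesianGuardedness.comp_map_mem {C : Type u} [Category.{v} C] [HasBinaryCoproducts C]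
    (H : CoCartesianGuardedness C) {X Y Z V₁ V₂ : C} {f : X ⟶ Y ⨿ Z} (hf : f ∈ H.H X Y Z)
    (u : Y ⟶ V₁) (v : Z ⟶ V₂) : f ≫ coprod.map u v ∈ H.H X V₁ V₂ := by
  simpa using H.cmp f (u ≫ coprod.inl) (v ≫ coprod.inr) hf (H.vac V₂ u)

namespace CoCartesianGuardedness

variable (H : CoCartesianGuardedness C)

def toGuardedStructure : GuardedStructure C where
  P A B X D := (coprod.inl ≫ · : (A ⊗ B ⟶ X ⊗ D) → (A ⟶ X ⨿ D)) ⁻¹' H.H A X D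
  uni A := Set.mem_preimage.mpr <|
    Set.mem_of_eq_of_mem (initial.hom_ext _ _) (H.vac (⊥_ C) (initial.to A))
  vac {_ _ _ D} f _ := Set.mem_preimage.mpr <| Set.mem_of_eq_of_mem (by simp) (H.vac D f)
  cmp {_ _ _ _ _ _ _ f} hg hf := by
    refine Set.mem_preimage.mpr <| Set.mem_of_eq_of_mem ?_ (H.cmp _ _ (coprod.inr ≫ f) hg hf)
    rw [← coprod.desc_comp, coprod.desc_inl_inr, Category.id_comp, Category.assoc]
  par hf hg := by
    refine Set.mem_preimage.mpr <| Set.mem_of_eq_of_mem ?_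
      (H.par _ _ (H.comp_map_mem hf coprod.inl coprod.inl) (H.comp_map_mem hg coprod.inr coprod.inr))
    rw [monoidalOfHasFiniteCoproducts.tensorμ_eq, monoidalOfHasFiniteCoproducts.tensorμ_eq]
    apply coprod.hom_ext <;> simp

theorem determines_toGuardedStructure : Determines H.toGuardedStructure H :=
  fun _ _ _ _ _ => Iff.rfl

end CoCartesianGuardedness

@[ext]
theorem GuardedStructure.ext {C : Type u} [Category.{v} C] [MonoidalCategory C]
    [SymmetricCategory C] {G₁ G₂ : GuardedStructure C} (h : G₁.P = G₂.P) : G₁ = G₂ := by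
  cases G₁; cases G₂; cases h; rfl

@[ext]
theorem CoCartesianGuardedness.ext {C : Type u} [Category.{v} C] [HasBinaryCoproducts C]
    {H₁ H₂ : CoCartesianGuardedness C} (h : H₁.H = H₂.H) : H₁ = H₂ := by
  cases H₁; cases H₂; cases h; rfl

namespace Determines

variable {G G₁ G₂ : GuardedStructure C} {H H₁ H₂ : CoCartesianGuardedness C}

theorem guardedStructure_eq (h₁ : Determines G₁ H) (h₂ : Determines G₂ H) : G₁ = G₂ := by
  ext X₁ X₂ Y₁ Y₂ f
  exact (h₁ X₁ X₂ Y₁ Y₂ f).trans (h₂ X₁ X₂ Y₁ Y₂ f).symm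

theorem coCartesianGuardedness_eq (h₁ : Determines G H₁) (h₂ : Determines G H₂) : H₁ = H₂ := by
  ext X Y₁ Y₂ g
  simpa using (h₁ X (⊥_ C) Y₁ Y₂ (coprod.desc g (initial.to _))).symm.trans
    (h₂ X (⊥_ C) Y₁ Y₂ (coprod.desc g (initial.to _)))

end Determines

/-- For a co-Cartesian category `(C,+,0)` there is a bijective
correspondence between guarded structures and co-Cartesian guardedness families,
determined by `f ∈ Hom•(X₁+X₂, Y₁+Y₂) ↔ f ∘ in₁ ∈ Hom_{in₂}(X₁, Y₁+Y₂)`: every guarded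
structure determines a unique such family, every family arises from a unique guarded
structure, and the two transformations are mutually inverse. -/
theorem coCartesian_guardedness_correspondence :
    (∀ G : GuardedStructure C, ∃! H : CoCartesianGuardedness C, Determines G H) ∧
    (∀ H : CoCartesianGuardedness C, ∃! G : GuardedStructure C, Determines G H) :=
  ⟨fun G => ⟨G.toCoCartesianGuardedness, G.determines_toCoCartesianGuardedness,
      fun _ h => h.coCartesianGuardedness_eq G.determines_toCoCartesianGuardedness⟩,
    fun H => ⟨H.toGuardedStructure, H.determines_toGuardedStructure,
      fun _ h => h.guardedStructure_eq H.determines_toGuardedStructure⟩⟩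
end

section
/- On every symmetric monoidal category, the vacuous (least) guarded structure is ideal: it coincides with the guarded structure generated by the guarded ideal that it induces, i.e. it is generated by its own family of guarded morphisms Hom^gd. -/
/-! Statement 6: the vacuous (least) guarded structure is ideal. -/

open CategoryTheory MonoidalCategory

universe v u

variable {C : Type u} [Category.{v} C] [MonoidalCategory C] [SymmetricCategory C]

/-- A morphism `f : X ⟶ Y` of a guarded category is *guarded* if
`υ_Y⁻¹ ∘ f ∘ υ̂_X ∈ Hom•(X ⊗ I, I ⊗ Y)` (all inputs unguarded, all outputs guarded). -/
def GuardedMor (G : GuardedStructure C) (X Y : C) : Set (X ⟶ Y) :=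
  {f | (ρ_ X).hom ≫ f ≫ (λ_ Y).inv ∈ G.P X (𝟙_ C) (𝟙_ C) Y}

/-- A *guarded ideal* in a symmetric monoidal category: a family of subsets
`G(X,Y) ⊆ Hom(X,Y)` closed under `⊗` and under composition with arbitrary morphisms on both
sides, with `G(I,I) = Hom(I,I)`. -/
def IsGuardedIdeal (Gd : ∀ X Y : C, Set (X ⟶ Y)) : Prop :=
  (∀ f : 𝟙_ C ⟶ 𝟙_ C, f ∈ Gd (𝟙_ C) (𝟙_ C)) ∧
  (∀ {X Y X' Y' : C} (f : X ⟶ Y) (g : X' ⟶ Y'),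
     f ∈ Gd X Y → g ∈ Gd X' Y' → (f ⊗ₘ g) ∈ Gd (X ⊗ X') (Y ⊗ Y')) ∧
  (∀ {W X Y Z : C} (u : W ⟶ X) (f : X ⟶ Y) (v : Y ⟶ Z),
     f ∈ Gd X Y → u ≫ f ≫ v ∈ Gd W Z)

/-- `G` is the guarded structure *generated* by the family `Gd`: it is the least guarded
structure in which every member of every `Gd X Y` is a guarded morphism.  A guarded category
is *ideally guarded over `Gd`* if its guarded structure is generated by `Gd`. -/
def Generates (Gd : ∀ X Y : C, Set (X ⟶ Y)) (G : GuardedStructure C) : Prop :=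
  (∀ (X Y : C) (f : X ⟶ Y), f ∈ Gd X Y → f ∈ GuardedMor G X Y) ∧
  (∀ G' : GuardedStructure C,
    (∀ (X Y : C) (f : X ⟶ Y), f ∈ Gd X Y → f ∈ GuardedMor G' X Y) →
    ∀ (A B X D : C) (f : (A ⊗ B) ⟶ X ⊗ D), f ∈ G.P A B X D → f ∈ G'.P A B X D)

/-- Membership in the vacuous guarded structure: `f` factors, up to the associator,
as `(h ⊗ 𝟙 D) ∘ (𝟙 A ⊗ g)` with `g : B ⟶ E ⊗ D`, `h : A ⊗ E ⟶ C`. -/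
def VacuouslyGuarded (A B X D : C) (f : (A ⊗ B) ⟶ X ⊗ D) : Prop :=
  ∃ (E : C) (g : B ⟶ E ⊗ D) (h : (A ⊗ E) ⟶ X),
    f = (𝟙 A ⊗ₘ g) ≫ (α_ A E D).inv ≫ (h ⊗ₘ 𝟙 D)

/-! The vacuous structure is the least guarded structure: a vacuously guarded morphism is a
composite `(𝟙 ⊗ g) ≫ α⁻¹ ≫ (h ⊗ 𝟙)`, whose outer factors lie in every guarded structure by (vac),
and whose associator does too, being built from (uni), (par) and unitors. Hence it lies in every
guarded structure, in particular in any one in which its own guarded morphisms are guarded. -/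

namespace GuardedStructure

variable (G : GuardedStructure C)

-- (uni) is what turns part of a guarded input into an unguarded output.
lemma leftUnitor_hom_tensor_mem (E D : C) : (λ_ (E ⊗ D)).hom ∈ G.P (𝟙_ C) (E ⊗ D) E D := by
  have h := G.cmp (G.cmp (G.vac (λ_ (𝟙_ C)).inv (𝟙 (E ⊗ D)))
    (G.par (G.uni E) (G.vac (𝟙 (𝟙_ C)) (𝟙 D)))) (G.vac (ρ_ E).hom (λ_ D).hom)
  convert h using 1
  simp only [tensorμ, braiding_tensorUnit_left, braiding_tensorUnit_right]
  monoidal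

lemma associator_inv_mem_s6 (A E D : C) : (α_ A E D).inv ∈ G.P A (E ⊗ D) (A ⊗ E) D := by
  have h := G.cmp (G.cmp (G.vac (ρ_ A).inv (λ_ (E ⊗ D)).inv)
    (G.par (G.vac (𝟙 A) (𝟙 (𝟙_ C))) (G.leftUnitor_hom_tensor_mem E D)))
    (G.vac (𝟙 (A ⊗ E)) (λ_ D).hom)
  convert h using 1
  simp only [tensorμ, braiding_tensorUnit_left, braiding_tensorUnit_right]
  monoidal

lemma mem_of_vacuouslyGuarded {A B X D : C} {f : (A ⊗ B) ⟶ X ⊗ D}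
    (hf : VacuouslyGuarded A B X D f) : f ∈ G.P A B X D := by
  obtain ⟨E, g, h, rfl⟩ := hf
  exact G.cmp (G.vac (𝟙 A) g) (G.cmp (G.associator_inv_mem_s6 A E D) (G.vac h (𝟙 D)))

end GuardedStructure

/-- On every symmetric monoidal category, the vacuous (least) guarded
structure is ideal: it is generated by the guarded ideal it induces, i.e. by its own family
of guarded morphisms `Hom^gd`. -/
theorem vacuous_guarded_structure_is_ideal (G : GuardedStructure C)
    (hvac : ∀ (A B X D : C) (f : (A ⊗ B) ⟶ X ⊗ D),
      f ∈ G.P A B X D ↔ VacuouslyGuarded A B X D f) :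
    Generates (GuardedMor G) G :=
  ⟨fun _ _ _ hf => hf, fun G' _ A B X D f hf =>
    G'.mem_of_vacuouslyGuarded ((hvac A B X D f).mp hf)⟩
end

section
/- Let G be a guarded ideal on a co-Cartesian category (C,+,0). The guarded structure generated by G is equivalently described, in terms of its associated co-Cartesian guardedness family, by Hom_{in₂}(X, Y+Z) = { [in₁, g]∘h | W an object, g ∈ G(W, Y+Z), h : X → Y+W }; consequently this guarded structure induces G, i.e. its guarded morphisms are exactly the members of G. -/
/-!
In a co-Cartesian category a guarded structure is determined by its family
`Hom_{in₂}(X, Y + Z)`. The maps `[in₁, g] ∘ h` with `g ∈ Gd` satisfy (vac₊), (cmp₊) and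
(par₊), so they form the family of a guarded structure in which every member of `Gd` is
guarded; by minimality the generated structure lies inside it. Conversely, in any structure
guarding `Gd`, a guarded `g` lies in `Hom_{in₂}` (rule (uni) moves the `Y`-part of its output
from guarded to unguarded), and `Hom_{in₂}` is stable under `[in₁, -] ∘ h`. Finally a guarded
`f : X → Y` satisfies `in₂ ∘ f = [in₁, g] ∘ h` with `in₁ : 0 → 0 + Y`, which writes `f` as
`h` followed by a map `0 + W → Y` built from `g`, a member of the ideal.
-/

open CategoryTheory MonoidalCategory

universe v u

variable {C : Type u} [Category.{v} C] [MonoidalCategory C] [SymmetricCategory C]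

open CategoryTheory.Limits

section CoCartesian

variable {D : Type u} [Category.{v} D] [HasBinaryCoproducts D] [HasInitial D]

attribute [local instance] CategoryTheory.monoidalOfHasFiniteCoproducts
  CategoryTheory.symmetricOfHasFiniteCoproducts

attribute [local simp] coprod.inl_desc coprod.inr_desc coprod.inl_desc_assoc coprod.inr_desc_assoc

theorem IsGuardedIdeal.precomp_mem {M : Type*} [Category M] [MonoidalCategory M]
    {Gd : ∀ X Y : M, Set (X ⟶ Y)} (hGd : IsGuardedIdeal Gd) {W X Y : M} (u : W ⟶ X)
    {f : X ⟶ Y} (hf : f ∈ Gd X Y) : u ≫ f ∈ Gd W Y := by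
  simpa using hGd.2.2 u f (𝟙 Y) hf

theorem IsGuardedIdeal.comp_mem {M : Type*} [Category M] [MonoidalCategory M]
    {Gd : ∀ X Y : M, Set (X ⟶ Y)} (hGd : IsGuardedIdeal Gd) {X Y Z : M} {f : X ⟶ Y}
    (hf : f ∈ Gd X Y) (v : Y ⟶ Z) : f ≫ v ∈ Gd X Z := by
  simpa using hGd.2.2 (𝟙 X) f v hf

theorem tensorμ_eq_coprod_desc (A B X Y : D) : tensorμ A B X Y =
    coprod.desc (coprod.map coprod.inl coprod.inl) (coprod.map coprod.inr coprod.inr) := by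
  apply coprod.hom_ext <;> apply coprod.hom_ext <;>
    simp [tensorμ, monoidalOfHasFiniteCoproducts.associator_hom,
      monoidalOfHasFiniteCoproducts.associator_inv]

namespace IsGuardedIdeal

variable {Gd : ∀ X Y : D, Set (X ⟶ Y)}

theorem initial_to_mem (hGd : IsGuardedIdeal Gd) {T : D} (f : ⊥_ D ⟶ T) :
    f ∈ Gd (⊥_ D) T := by
  -- the monoidal unit is `⊥_ D`, all of whose endomorphisms lie in the ideal
  exact Category.id_comp f ▸ comp_mem hGd (hGd.1 (𝟙 _)) f

theorem coprod_desc_mem (hGd : IsGuardedIdeal Gd) {W W' T : D} {f : W ⟶ T} {f' : W' ⟶ T}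
    (hf : f ∈ Gd W T) (hf' : f' ∈ Gd W' T) : coprod.desc f f' ∈ Gd (W ⨿ W') T := by
  simpa using comp_mem hGd (hGd.2.1 f f' hf hf') (coprod.desc (𝟙 T) (𝟙 T))

end IsGuardedIdeal

/-- The co-Cartesian guardedness family `Hom_{in₂}(X, Y + Z)` of `G`. -/
def GuardedStructure.homInr (G : GuardedStructure D) (X Y Z : D) : Set (X ⟶ Y ⨿ Z) :=
  {u | coprod.desc u (initial.to (Y ⨿ Z)) ∈ G.P X (⊥_ D) Y Z}

namespace GuardedStructure

variable (G : GuardedStructure D)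

theorem desc_initial_to_id_mem (Y Z : D) :
    coprod.desc (initial.to (Y ⨿ Z)) (𝟙 (Y ⨿ Z)) ∈ G.P (⊥_ D) (Y ⨿ Z) Y Z := by
  have h := G.cmp (G.cmp (G.vac (initial.to (𝟙_ D ⊗ 𝟙_ D)) (𝟙 (Y ⊗ Z)))
      (G.par (G.uni Y) (G.vac (𝟙 (𝟙_ D)) (𝟙 Z))))
    (G.vac (coprod.desc (𝟙 Y) (initial.to Y) : Y ⊗ 𝟙_ D ⟶ Y)
      (coprod.desc (initial.to Z) (𝟙 Z) : 𝟙_ D ⊗ Z ⟶ Z))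
  refine (congrArg (· ∈ G.P (⊥_ D) (Y ⨿ Z) Y Z) ?_).mpr h
  apply coprod.hom_ext
  · exact initial.hom_ext _ _
  · apply coprod.hom_ext <;> simp [tensorμ_eq_coprod_desc, monoidalOfHasFiniteCoproducts.tensorHom]

theorem mem_homInr_of_mem_guardedMor {W Y Z : D} {g : W ⟶ Y ⨿ Z}
    (hg : g ∈ GuardedMor G W (Y ⨿ Z)) : g ∈ G.homInr W Y Z := by
  refine (congrArg (· ∈ G.P W (⊥_ D) Y Z) ?_).mpr (G.cmp hg (G.desc_initial_to_id_mem Y Z))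
  apply coprod.hom_ext
  · simp [monoidalOfHasFiniteCoproducts.rightUnitor_hom,
      monoidalOfHasFiniteCoproducts.leftUnitor_inv]
  · exact initial.hom_ext _ _

theorem comp_desc_inl_mem_homInr {X Y Z W : D} (h : X ⟶ Y ⨿ W) {g : W ⟶ Y ⨿ Z}
    (hg : g ∈ G.homInr W Y Z) : h ≫ coprod.desc coprod.inl g ∈ G.homInr X Y Z := by
  have hmem := G.cmp (G.cmp (G.vac h (initial.to (𝟙_ D ⊗ 𝟙_ D)))
      (G.par (G.vac (𝟙 Y) (𝟙 (𝟙_ D))) hg))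
    (G.vac (coprod.desc (𝟙 Y) (𝟙 Y) : Y ⊗ Y ⟶ Y)
      (coprod.desc (initial.to Z) (𝟙 Z) : 𝟙_ D ⊗ Z ⟶ Z))
  refine (congrArg (· ∈ G.P X (⊥_ D) Y Z) ?_).mpr hmem
  apply coprod.hom_ext
  · simp [tensorμ_eq_coprod_desc, monoidalOfHasFiniteCoproducts.tensorHom]
  · exact initial.hom_ext _ _

end GuardedStructure

def homInrOfIdeal (Gd : ∀ X Y : D, Set (X ⟶ Y)) (X Y Z : D) : Set (X ⟶ Y ⨿ Z) :=
  {u | ∃ (W : D) (g : W ⟶ Y ⨿ Z) (_ : g ∈ Gd W (Y ⨿ Z)) (h : X ⟶ Y ⨿ W),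
    u = h ≫ coprod.desc coprod.inl g}

section OfGuardedIdeal

variable {Gd : ∀ X Y : D, Set (X ⟶ Y)}

theorem comp_inl_mem_homInrOfIdeal (hGd : IsGuardedIdeal Gd) {X Y Z : D} (f : X ⟶ Y) :
    f ≫ coprod.inl ∈ homInrOfIdeal Gd X Y Z :=
  ⟨⊥_ D, initial.to _, hGd.initial_to_mem _, f ≫ coprod.inl, by simp⟩

theorem comp_desc_mem_homInrOfIdeal (hGd : IsGuardedIdeal Gd) {A E F X Z : D}
    {u : A ⟶ E ⨿ F} {v : E ⟶ X ⨿ Z} (hu : u ∈ homInrOfIdeal Gd A E F)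
    (hv : v ∈ homInrOfIdeal Gd E X Z) (k : F ⟶ X ⨿ Z) :
    u ≫ coprod.desc v k ∈ homInrOfIdeal Gd A X Z := by
  obtain ⟨W, g, hg, h, rfl⟩ := hu
  obtain ⟨W', g', hg', h', rfl⟩ := hv
  refine ⟨W' ⨿ W, coprod.desc g' (g ≫ coprod.desc (h' ≫ coprod.desc coprod.inl g') k),
    hGd.coprod_desc_mem hg' (hGd.comp_mem hg _),
    h ≫ coprod.desc (h' ≫ coprod.map (𝟙 X) coprod.inl) (coprod.inr ≫ coprod.inr), ?_⟩
  simp only [Category.assoc]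
  congr 1
  ext <;> simp

theorem coprod_desc_mem_homInrOfIdeal (hGd : IsGuardedIdeal Gd) {A A' Y Z : D}
    {u : A ⟶ Y ⨿ Z} {u' : A' ⟶ Y ⨿ Z} (hu : u ∈ homInrOfIdeal Gd A Y Z)
    (hu' : u' ∈ homInrOfIdeal Gd A' Y Z) :
    coprod.desc u u' ∈ homInrOfIdeal Gd (A ⨿ A') Y Z := by
  obtain ⟨W, g, hg, h, rfl⟩ := hu
  obtain ⟨W', g', hg', h', rfl⟩ := hu'
  refine ⟨W ⨿ W', coprod.desc g g', hGd.coprod_desc_mem hg hg',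
    coprod.desc (h ≫ coprod.map (𝟙 Y) coprod.inl) (h' ≫ coprod.map (𝟙 Y) coprod.inr), ?_⟩
  ext <;> simp

theorem comp_map_mem_homInrOfIdeal (hGd : IsGuardedIdeal Gd) {A X Z X' Z' : D}
    {u : A ⟶ X ⨿ Z} (hu : u ∈ homInrOfIdeal Gd A X Z) (a : X ⟶ X') (b : Z ⟶ Z') :
    u ≫ coprod.map a b ∈ homInrOfIdeal Gd A X' Z' := by
  have hmap : coprod.map a b = coprod.desc (a ≫ coprod.inl) (b ≫ coprod.inr) := by
    ext <;> simp
  rw [hmap]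
  exact comp_desc_mem_homInrOfIdeal hGd hu (comp_inl_mem_homInrOfIdeal hGd a) _

def GuardedStructure.ofGuardedIdeal (hGd : IsGuardedIdeal Gd) : GuardedStructure D where
  P A _ X Z := {f | coprod.inl ≫ f ∈ homInrOfIdeal Gd A X Z}
  uni _ := ⟨⊥_ D, initial.to _, hGd.initial_to_mem _, initial.to _, initial.hom_ext _ _⟩
  vac f g := by
    simpa [monoidalOfHasFiniteCoproducts.tensorHom] using comp_inl_mem_homInrOfIdeal hGd f
  cmp {A B E F X Z g f} hg hf := by
    have hf_eq : f = coprod.desc (coprod.inl ≫ f) (coprod.inr ≫ f) := by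
      apply coprod.hom_ext <;> simp
    show (coprod.inl : A ⟶ A ⨿ B) ≫ g ≫ f ∈ homInrOfIdeal Gd A X Z
    rw [← Category.assoc, hf_eq]
    exact comp_desc_mem_homInrOfIdeal hGd hg hf _
  par {A B X Z A' B' X' Z' f g} hf hg := by
    have hpar : coprod.inl ≫ tensorμ A A' B B' ≫ (f ⊗ₘ g) ≫ tensorμ X Z X' Z' =
        coprod.desc ((coprod.inl ≫ f) ≫ coprod.map coprod.inl coprod.inl)
          ((coprod.inl ≫ g) ≫ coprod.map coprod.inr coprod.inr) := by
      apply coprod.hom_ext <;>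
        simp [tensorμ_eq_coprod_desc, monoidalOfHasFiniteCoproducts.tensorHom]
    exact (congrArg (· ∈ homInrOfIdeal Gd (A ⨿ A') (X ⨿ X') (Z ⨿ Z')) hpar).mpr
      (coprod_desc_mem_homInrOfIdeal hGd (comp_map_mem_homInrOfIdeal hGd hf _ _)
        (comp_map_mem_homInrOfIdeal hGd hg _ _))

theorem guardedMor_ofGuardedIdeal (hGd : IsGuardedIdeal Gd) {X Y : D} {f : X ⟶ Y}
    (hf : f ∈ Gd X Y) : f ∈ GuardedMor (GuardedStructure.ofGuardedIdeal hGd) X Y :=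
  ⟨X, f ≫ coprod.inr, hGd.comp_mem hf _, coprod.inr, by
    simp [monoidalOfHasFiniteCoproducts.rightUnitor_hom,
      monoidalOfHasFiniteCoproducts.leftUnitor_inv]⟩

theorem mem_of_comp_inr_mem_homInrOfIdeal (hGd : IsGuardedIdeal Gd) {X Y : D} {f : X ⟶ Y}
    (hf : f ≫ coprod.inr ∈ homInrOfIdeal Gd X (⊥_ D) Y) : f ∈ Gd X Y := by
  obtain ⟨W, g, hg, h, he⟩ := hf
  have hf_eq : f = h ≫ coprod.desc (initial.to Y) (g ≫ coprod.desc (initial.to Y) (𝟙 Y)) :=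
    calc f = (f ≫ coprod.inr) ≫ coprod.desc (initial.to Y) (𝟙 Y) := by simp
      _ = _ := by
        rw [he, Category.assoc]
        congr 1
        ext
        simp
  rw [hf_eq]
  exact hGd.precomp_mem h (hGd.coprod_desc_mem (hGd.initial_to_mem _) (hGd.comp_mem hg _))

end OfGuardedIdeal

namespace Generates

variable {Gd : ∀ X Y : D, Set (X ⟶ Y)} {G : GuardedStructure D}

theorem inl_comp_mem_homInrOfIdeal (hGd : IsGuardedIdeal Gd) (hgen : Generates Gd G)
    {A B X Z : D} {f : A ⨿ B ⟶ X ⨿ Z} (hf : f ∈ G.P A B X Z) :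
    coprod.inl ≫ f ∈ homInrOfIdeal Gd A X Z :=
  hgen.2 _ (fun _ _ _ => guardedMor_ofGuardedIdeal hGd) A B X Z f hf

theorem homInr_eq (hGd : IsGuardedIdeal Gd) (hgen : Generates Gd G) (X Y Z : D) :
    G.homInr X Y Z = homInrOfIdeal Gd X Y Z := by
  ext u
  refine ⟨fun hu => by simpa using hgen.inl_comp_mem_homInrOfIdeal hGd hu, ?_⟩
  rintro ⟨W, g, hg, h, rfl⟩
  exact G.comp_desc_inl_mem_homInr h (G.mem_homInr_of_mem_guardedMor (hgen.1 _ _ g hg))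

theorem guardedMor_eq (hGd : IsGuardedIdeal Gd) (hgen : Generates Gd G) (X Y : D) :
    GuardedMor G X Y = Gd X Y := by
  ext f
  refine ⟨fun hf => mem_of_comp_inr_mem_homInrOfIdeal hGd ?_, hgen.1 X Y f⟩
  have h := hgen.inl_comp_mem_homInrOfIdeal hGd hf
  simp only [monoidalOfHasFiniteCoproducts.rightUnitor_hom,
    monoidalOfHasFiniteCoproducts.leftUnitor_inv, coprod.inl_desc_assoc, Category.id_comp] at h
  exact h

end Generates

/-- Let `Gd` be a guarded ideal on a co-Cartesian category `(C,+,0)` and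
let `G` be the guarded structure generated by `Gd`.  Then, in terms of the associated
co-Cartesian guardedness family (where `u ∈ Hom_{in₂}(X, Y+Z)` is rendered as
`[u, ¡] ∈ Hom•(X+0, Y+Z)`),

`Hom_{in₂}(X, Y+Z) = { [in₁, g] ∘ h ∣ W an object, g ∈ Gd W (Y+Z), h : X ⟶ Y+W }`,

and consequently the generated guarded structure induces `Gd`, i.e. its guarded morphisms
are exactly the members of `Gd`. -/
theorem generated_guarded_structure_coCartesian (Gd : ∀ X Y : D, Set (X ⟶ Y))
    (hGd : IsGuardedIdeal Gd) (G : GuardedStructure D) (hgen : Generates Gd G) :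
    (∀ (X Y Z : D) (u : X ⟶ Y ⨿ Z),
      (coprod.desc u (initial.to (Y ⨿ Z)) ∈ G.P X (⊥_ D) Y Z) ↔
        ∃ (W : D) (g : W ⟶ Y ⨿ Z) (_ : g ∈ Gd W (Y ⨿ Z)) (h : X ⟶ Y ⨿ W),
          u = h ≫ coprod.desc coprod.inl g) ∧
    (∀ X Y : D, GuardedMor G X Y = Gd X Y) :=
  ⟨fun X Y Z u => Set.ext_iff.mp (hgen.homInr_eq hGd X Y Z) u, hgen.guardedMor_eq hGd⟩

end CoCartesian
end

section
/- Let C be a Cartesian category and T a strong monad on C with unit η and strength τ (write τ̂_{V,A} : TV×A → T(V×A) for the transpose of the strength). Let (−)_‡ be a recursion operator on C^T_⋆ satisfying naturality. Then (−)_‡ extends to all morphisms f : V×A → A with V an arbitrary object of C and (A,a) an Eilenberg–Moore T-algebra, by setting f_‡ := (a∘(Tf)∘τ̂_{V,A})_‡∘η_V (the operator on the right is applied to a morphism parameterized by the free algebra (TV, μ_V)); this extension agrees with the original operator whenever V carries a T-algebra structure, and the extended operator satisfies f_‡ = (a∘(Tf)∘τ̂_{V,A})_‡∘η_V for all f : V×A→A.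 -/
open CategoryTheory CategoryTheory.Limits CategoryTheory.CartesianMonoidalCategory
open CategoryTheory.MonoidalCategory

universe v u

variable {D : Type u} [Category.{v} D] [CartesianMonoidalCategory D]

/-- A *strength* for a monad `T` on a Cartesian category: a natural transformation
`τ_{X,Y} : X × TY ⟶ T(X × Y)` satisfying the usual coherence conditions of strong
monads. -/
structure Strength (T : Monad D) where
  /-- the strength -/
  τ : ∀ X Y : D, (X ⊗ T.obj Y) ⟶ T.obj (X ⊗ Y)
  natural : ∀ {X X' Y Y' : D} (f : X ⟶ X') (g : Y ⟶ Y'),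
    (f ⊗ₘ T.map g) ≫ τ X' Y' = τ X Y ≫ T.map (f ⊗ₘ g)
  unit_comp : ∀ X Y : D, (𝟙 X ⊗ₘ T.η.app Y) ≫ τ X Y = T.η.app (X ⊗ Y)
  mult_comp : ∀ X Y : D, (𝟙 X ⊗ₘ T.μ.app Y) ≫ τ X Y =
    τ X (T.obj Y) ≫ T.map (τ X Y) ≫ T.μ.app (X ⊗ Y)
  unitor_comp : ∀ Y : D, τ (𝟙_ D) Y ≫ T.map (λ_ Y).hom = (λ_ (T.obj Y)).hom
  assoc_comp : ∀ X Y Z : D,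
    (α_ X Y (T.obj Z)).hom ≫ (𝟙 X ⊗ₘ τ Y Z) ≫ τ X (Y ⊗ Z) =
      τ (X ⊗ Y) Z ≫ T.map (α_ X Y Z).hom

/-- The transpose `τ̂_{X,Y} : TX × Y ⟶ T(X × Y)` of the strength along the symmetry. -/
def Strength.tauHat {T : Monad D} (s : Strength T) (X Y : D) :
    (T.obj X ⊗ Y) ⟶ T.obj (X ⊗ Y) :=
  letI : BraidedCategory D := BraidedCategory.ofCartesianMonoidalCategory
  (β_ (T.obj X) Y).hom ≫ s.τ Y X ≫ T.map (β_ Y X).hom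

/-- A *recursion operator* on the category `C^T_⋆` of Eilenberg–Moore `T`-algebras and
arbitrary morphisms between their carriers: it assigns to `f : B × A ⟶ A` (with `B`, `A`
algebras) a morphism `f‡ : B ⟶ A` satisfying the fixpoint law `f‡ = f ∘ ⟨id, f‡⟩`. -/
structure RecursionOp (T : Monad D) where
  /-- the recursion operator -/
  recur : ∀ (B A : T.Algebra) (f : (B.A ⊗ A.A) ⟶ A.A), B.A ⟶ A.A
  /-- the fixpoint law `f‡ = f ∘ ⟨id, f‡⟩` -/
  fixpoint : ∀ (B A : T.Algebra) (f : (B.A ⊗ A.A) ⟶ A.A),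
    recur B A f = lift (𝟙 B.A) (recur B A f) ≫ f

/-- naturality of a recursion operator: `f‡ ∘ g = (f ∘ (g × id))‡` for morphisms `g`
between algebra carriers. -/
def RecursionOp.Natural {T : Monad D} (R : RecursionOp T) : Prop :=
  ∀ (B' B A : T.Algebra) (f : (B.A ⊗ A.A) ⟶ A.A) (g : B'.A ⟶ B.A),
    g ≫ R.recur B A f = R.recur B' A ((g ⊗ₘ 𝟙 A.A) ≫ f)

/- The extension only needs `f` on the image of `η_B ⊗ A`, where `τ̂` degenerates to `η`; the
algebra unit law then recovers `f`, and naturality along `η_B : B ⟶ TB` moves the recursion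
from the free algebra back to `B`. -/

namespace Strength

variable {T : Monad D} (s : Strength T)

theorem unit_tensorHom_id_comp_tauHat (X Y : D) :
    (T.η.app X ⊗ₘ 𝟙 Y) ≫ s.tauHat X Y = T.η.app (X ⊗ Y) := by
  let _ : BraidedCategory D := BraidedCategory.ofCartesianMonoidalCategory
  have hβ : (T.η.app X ⊗ₘ 𝟙 Y) ≫ (β_ (T.obj X) Y).hom = (β_ X Y).hom ≫ (𝟙 Y ⊗ₘ T.η.app X) :=
    BraidedCategory.braiding_naturality (T.η.app X) (𝟙 Y)
  simp only [tauHat]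
  rw [reassoc_of% hβ, reassoc_of% (s.unit_comp Y X), ← T.η.naturality]
  simp

end Strength

theorem CategoryTheory.Monad.Algebra.unit_map_comp_a {C : Type*} [Category C] {T : Monad C}
    {X : C} (A : T.Algebra) (f : X ⟶ A.A) :
    T.η.app X ≫ T.map f ≫ A.a = f := by
  rw [← T.η.naturality_assoc, A.unit]
  simp

namespace RecursionOp

variable {T : Monad D} (s : Strength T)

def extend (R : RecursionOp T) (V : D) (A : T.Algebra) (f : (V ⊗ A.A) ⟶ A.A) : V ⟶ A.A :=
  T.η.app V ≫ R.recur ((Monad.free T).obj V) A (s.tauHat V A.A ≫ T.map f ≫ A.a)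

theorem Natural.extend_eq_recur {R : RecursionOp T} (hnat : R.Natural) (B A : T.Algebra)
    (f : (B.A ⊗ A.A) ⟶ A.A) : R.extend s B.A A f = R.recur B A f := by
  refine (hnat B ((Monad.free T).obj B.A) A _ (T.η.app B.A)).trans (congrArg _ ?_)
  exact ((reassoc_of% s.unit_tensorHom_id_comp_tauHat B.A A.A) _).trans (A.unit_map_comp_a f)

end RecursionOp

/-- Let `T` be a strong monad on a Cartesian category `C` and let
`(−)‡` be a recursion operator on `C^T_⋆` satisfying naturality.  Then `(−)‡` extends to
all morphisms `f : V × A → A` with `V` an arbitrary object, via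
`f‡ := (a ∘ Tf ∘ τ̂_{V,A})‡ ∘ η_V` (using the free algebra `(TV, μ_V)`); the extension
agrees with the original operator whenever `V` carries a `T`-algebra structure. -/
theorem recursion_operator_extension {T : Monad D} (s : Strength T)
    (R : RecursionOp T) (hnat : R.Natural) :
    ∃ ext : ∀ (V : D) (A : T.Algebra) (f : (V ⊗ A.A) ⟶ A.A), V ⟶ A.A,
      (∀ (V : D) (A : T.Algebra) (f : (V ⊗ A.A) ⟶ A.A),
        ext V A f =
          T.η.app V ≫ R.recur ((Monad.free T).obj V) A (s.tauHat V A.A ≫ T.map f ≫ A.a)) ∧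
      (∀ (B A : T.Algebra) (f : (B.A ⊗ A.A) ⟶ A.A), ext B.A A f = R.recur B A f) := by
  exact ⟨R.extend s, fun _ _ _ => rfl, hnat.extend_eq_recur s⟩
end
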